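/- arXiv:2507.21528 — 3 statements merged into one kernel-verified Lean document; each statement's English description precedes it below -/
import Mathlib

section
/- Let N be a positive integer, ε a primitive N-th root of unity, and let the cyclic group G of order N act on the polynomial ring ℂ[x,y] by g·x = εx and g·y = ε⁻¹y. Then the subring of G-invariants ℂ[x,y]^G equals the ℂ-subalgebra generated by x^N, y^N, and xy. -/
/-!
The action is diagonal on monomials: `x^i y^j` is scaled by `ε^i (ε⁻¹)^j`, so a polynomial is
invariant exactly when every monomial in its support has `i ≡ j [MOD N]`, and such a monomial is
`(xy)^min(i,j)` times a power of `x^N` or of `y^N`.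
-/

open MvPolynomial

section Diagonal

variable {R σ : Type*} [CommSemiring R] (a : σ → R)

theorem aeval_C_mul_X_monomial (m : σ →₀ ℕ) (c : R) :
    aeval (fun i => C (a i) * X i) (monomial m c : MvPolynomial σ R) =
      monomial m ((m.prod fun i k => a i ^ k) * c) := by
  rw [aeval_monomial, algebraMap_eq, monomial_eq, C_mul]
  simp only [mul_pow, Finsupp.prod_mul, ← C_pow, ← map_finsuppProd]
  ring

theorem coeff_aeval_C_mul_X (p : MvPolynomial σ R) (m : σ →₀ ℕ) :
    coeff m (aeval (fun i => C (a i) * X i) p) = (m.prod fun i k => a i ^ k) * coeff m p := by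
  classical
  induction p using MvPolynomial.induction_on' with
  | monomial n c =>
    rw [aeval_C_mul_X_monomial, coeff_monomial, coeff_monomial]
    split_ifs with h
    · rw [h]
    · rw [mul_zero]
  | add p q hp hq => rw [map_add, coeff_add, coeff_add, hp, hq, mul_add]

theorem aeval_C_mul_X_eq_self_iff [IsDomain R] {p : MvPolynomial σ R} :
    aeval (fun i => C (a i) * X i) p = p ↔ ∀ m ∈ p.support, (m.prod fun i k => a i ^ k) = 1 := by
  simp only [MvPolynomial.ext_iff, coeff_aeval_C_mul_X, mem_support_iff]
  refine forall_congr' fun m => ⟨fun h hm => ?_, fun h => ?_⟩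
  · exact mul_right_cancel₀ hm (h.trans (one_mul _).symm)
  · by_cases hm : coeff m p = 0
    · rw [hm, mul_zero]
    · rw [h hm, one_mul]

end Diagonal

theorem MvPolynomial.vecCons_C_mul_X {R : Type*} [CommSemiring R] (a b : R) :
    ![C a * X 0, C b * X 1] = fun i : Fin 2 => C (![a, b] i) * X i := by
  ext i : 1
  fin_cases i <;> rfl

theorem Finsupp.prod_fin_two_pow {M : Type*} [CommMonoid M] (m : Fin 2 →₀ ℕ) (a b : M) :
    (m.prod fun i k => ![a, b] i ^ k) = a ^ m 0 * b ^ m 1 := by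
  rw [Finsupp.prod_fintype _ _ fun i => pow_zero _, Fin.prod_univ_two]
  rfl

theorem IsPrimitiveRoot.pow_mul_inv_pow_eq_one_iff {K : Type*} [Field K] {ε : K} {N : ℕ}
    (hε : IsPrimitiveRoot ε N) (h0 : ε ≠ 0) (i j : ℕ) :
    ε ^ i * ε⁻¹ ^ j = 1 ↔ i ≡ j [MOD N] := by
  rw [inv_pow, ← div_eq_mul_inv, ← zpow_natCast, ← zpow_natCast, ← zpow_sub₀ h0,
    hε.zpow_eq_one_iff_dvd, Nat.ModEq.comm, Nat.modEq_iff_dvd]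

theorem Submonoid.pow_mul_pow_mem_of_modEq {M : Type*} [CommMonoid M] {S : Submonoid M}
    {x y : M} {N i j : ℕ} (hxN : x ^ N ∈ S) (hyN : y ^ N ∈ S) (hxy : x * y ∈ S)
    (h : i ≡ j [MOD N]) : x ^ i * y ^ j ∈ S := by
  wlog hji : j ≤ i generalizing x y i j
  · rw [mul_comm]
    exact this hyN hxN (mul_comm x y ▸ hxy) h.symm (le_of_not_ge hji)
  obtain ⟨k, hk⟩ := (Nat.modEq_iff_dvd' hji).mp h.symm
  have hsplit : x ^ i * y ^ j = (x * y) ^ j * (x ^ N) ^ k := by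
    rw [mul_pow, ← pow_mul, ← hk, mul_right_comm, ← pow_add, Nat.add_sub_cancel' hji]
  rw [hsplit]
  exact mul_mem (pow_mem hxy j) (pow_mem hxN k)

theorem MvPolynomial.monomial_mem_adjoin_of_modEq {R : Type*} [CommSemiring R] {N : ℕ}
    {m : Fin 2 →₀ ℕ} (h : m 0 ≡ m 1 [MOD N]) (c : R) :
    monomial m c ∈ Algebra.adjoin R {X 0 ^ N, X 1 ^ N, X 0 * X 1} := by
  set A : Subalgebra R (MvPolynomial (Fin 2) R) := Algebra.adjoin R {X 0 ^ N, X 1 ^ N, X 0 * X 1}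
  have hxN : X 0 ^ N ∈ A := Algebra.subset_adjoin (by simp)
  have hyN : X 1 ^ N ∈ A := Algebra.subset_adjoin (by simp)
  have hxy : X 0 * X 1 ∈ A := Algebra.subset_adjoin (by simp)
  rw [monomial_eq, Finsupp.prod_fintype _ _ fun i => pow_zero _, Fin.prod_univ_two]
  exact mul_mem (A.algebraMap_mem c)
    (Submonoid.pow_mul_pow_mem_of_modEq (S := A.toSubmonoid) hxN hyN hxy h)

/-- The invariants of `ℂ[x,y]` under the cyclic group of order `N` acting by
`x ↦ εx`, `y ↦ ε⁻¹y` (for `ε` a primitive `N`-th root of unity) form the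
subalgebra generated by `x^N`, `y^N` and `xy`. -/
theorem invariants_eq_adjoin (N : ℕ) (hN : 0 < N) (ε : ℂ) (hε : IsPrimitiveRoot ε N) :
    {p : MvPolynomial (Fin 2) ℂ |
        aeval ![C ε * X 0, C ε⁻¹ * X 1] p = p}
      = ↑(Algebra.adjoin ℂ
          ({X 0 ^ N, X 1 ^ N, X 0 * X 1} : Set (MvPolynomial (Fin 2) ℂ))) := by
  have h0 : ε ≠ 0 := hε.ne_zero hN.ne'
  ext p
  constructor
  · intro hp
    rw [Set.mem_ofPred_eq, vecCons_C_mul_X, aeval_C_mul_X_eq_self_iff] at hp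
    rw [SetLike.mem_coe, p.as_sum]
    refine Subalgebra.sum_mem _ fun m hm => monomial_mem_adjoin_of_modEq ?_ _
    rw [← hε.pow_mul_inv_pow_eq_one_iff h0, ← Finsupp.prod_fin_two_pow]
    exact hp m hm
  · intro hp
    refine (Algebra.adjoin_le ?_ : _ ≤ AlgHom.equalizer (aeval _) (AlgHom.id ℂ _)) hp
    rintro q (rfl | rfl | rfl)
    · simp [mul_pow, ← C_pow, hε.pow_eq_one]
    · simp [mul_pow, ← C_pow, hε.pow_eq_one]
    · simp only [SetLike.mem_coe, AlgHom.mem_equalizer, map_mul, aeval_X, Matrix.cons_val_zero,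
        Matrix.cons_val_one, Matrix.cons_val_fin_one, AlgHom.coe_id, id_eq]
      rw [mul_mul_mul_comm, ← C_mul, mul_inv_cancel₀ h0, C_1, one_mul]
end

section
/- Let Q be the submonoid of ℕ² generated by (N,0), (0,N), and (1,1), where N is a positive integer. Then the monoid algebra ℂ[Q] is isomorphic as a ℂ-algebra to ℂ[x,y,z]/(xy - z^N). -/
/-!
Sending the exponent vector `(a, b, c)` of `x^a y^b z^c` to `a(N,0) + b(0,N) + c(1,1)` is a
surjection `ℕ³ → Q`, so it induces a surjection `k[x,y,z] → k[Q]`, which kills `xy - z^N`.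
Conversely, two exponent vectors with the same image differ by trading `(xy)^n` for `z^(nN)`,
so choosing any preimage gives a well-defined monoid map `Q → k[x,y,z]/(xy - z^N)`. The two
induced algebra maps are inverse to each other on monomials.
-/

open MvPolynomial

namespace MonoidHom

variable {M P A : Type*} [Monoid M] [Monoid P] [Monoid A]

noncomputable def liftOfSurjectiveOfFibers (w : M →* P) (hw : Function.Surjective w) (f : M →* A)
    (hf : ∀ a b, w a = w b → f a = f b) : P →* A where
  toFun p := f (Function.surjInv hw p)
  map_one' := by
    rw [← map_one f]
    exact hf _ _ (by rw [Function.surjInv_eq hw, map_one])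
  map_mul' p q := by
    rw [← map_mul]
    exact hf _ _ (by simp only [map_mul, Function.surjInv_eq])

theorem liftOfSurjectiveOfFibers_apply (w : M →* P) (hw : Function.Surjective w) (f : M →* A)
    (hf : ∀ a b, w a = w b → f a = f b) (a : M) :
    w.liftOfSurjectiveOfFibers hw f hf (w a) = f a :=
  hf _ _ (Function.surjInv_eq hw (w a))

end MonoidHom

theorem MvPolynomial.monomial_sub_monomial_dvd {σ R : Type*} [CommRing R] (s t d : σ →₀ ℕ)
    (n : ℕ) :
    (monomial s 1 - monomial t 1 : MvPolynomial σ R) ∣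
      monomial (d + n • s) 1 - monomial (d + n • t) 1 := by
  have h := (sub_dvd_pow_sub_pow (monomial s 1 : MvPolynomial σ R) (monomial t 1) n).mul_left
    (monomial d 1)
  rwa [monomial_pow, monomial_pow, one_pow, mul_sub, monomial_mul, monomial_mul, one_mul] at h

namespace ANSingularity

variable (k : Type*) [CommRing k] (N : ℕ)

abbrev Q : AddSubmonoid (ℕ × ℕ) := AddSubmonoid.closure {(N, 0), (0, N), (1, 1)}

abbrev CoordRing : Type _ :=
  MvPolynomial (Fin 3) k ⧸ Ideal.span {(X 0 * X 1 - X 2 ^ N : MvPolynomial (Fin 3) k)}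

noncomputable def weight : (Fin 3 →₀ ℕ) →+ ℕ × ℕ where
  toFun e := (e 0 * N + e 2, e 1 * N + e 2)
  map_zero' := by simp
  map_add' e e' := by ext <;> simp only [Finsupp.add_apply, Prod.mk_add_mk] <;> ring

theorem weight_mem (e : Fin 3 →₀ ℕ) : weight N e ∈ Q N := by
  have he : weight N e = e 0 • (N, 0) + e 1 • (0, N) + e 2 • (1, 1) := by
    ext <;> simp [weight]
  rw [he]
  refine add_mem (add_mem ?_ ?_) ?_ <;>
    exact nsmul_mem (AddSubmonoid.subset_closure (by simp)) _

theorem Q_le_mrange_weight : Q N ≤ AddMonoidHom.mrange (weight N) := by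
  refine AddSubmonoid.closure_le.2 ?_
  rintro _ (rfl | rfl | rfl)
  exacts [⟨Finsupp.single 0 1, by simp [weight]⟩, ⟨Finsupp.single 1 1, by simp [weight]⟩,
    ⟨Finsupp.single 2 1, by simp [weight]⟩]

noncomputable def weightQ : (Fin 3 →₀ ℕ) →+ Q N := (weight N).codRestrict (Q N) (weight_mem N)

theorem weightQ_surjective : Function.Surjective (weightQ N) := fun q ↦ by
  obtain ⟨e, he⟩ := Q_le_mrange_weight N q.2
  exact ⟨e, Subtype.ext he⟩

theorem X_mul_X_sub_X_pow_eq_monomial_sub_monomial :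
    (X 0 * X 1 - X 2 ^ N : MvPolynomial (Fin 3) k) =
      monomial (Finsupp.single 0 1 + Finsupp.single 1 1) 1 - monomial (Finsupp.single 2 N) 1 := by
  rw [X, X, monomial_mul, one_mul, X_pow_eq_monomial]

theorem mk_monomial_eq_of_weight_eq (hN : 0 < N) {e e' : Fin 3 →₀ ℕ}
    (h : weight N e = weight N e') :
    (Ideal.Quotient.mk _ (monomial e 1) : CoordRing k N) = Ideal.Quotient.mk _ (monomial e' 1) := by
  wlog h2 : e 2 ≤ e' 2 generalizing e e'
  · exact (this h.symm (by omega)).symm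
  simp only [weight, AddMonoidHom.coe_mk, ZeroHom.coe_mk, Prod.mk.injEq] at h
  obtain ⟨h0, h1⟩ := h
  have hle : e' 0 ≤ e 0 := Nat.le_of_mul_le_mul_right (by omega) hN
  have hdiff : e 0 + e' 1 = e 1 + e' 0 :=
    Nat.eq_of_mul_eq_mul_right hN (by rw [add_mul, add_mul]; omega)
  have h2' : e' 2 = e 2 + (e 0 - e' 0) * N := by rw [Nat.sub_mul]; omega
  set d : Fin 3 →₀ ℕ := Finsupp.single 0 (e' 0) + Finsupp.single 1 (e' 1) + Finsupp.single 2 (e 2)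
  have he : e = d + (e 0 - e' 0) • (Finsupp.single 0 1 + Finsupp.single 1 1) := by
    ext i; fin_cases i <;> simp [d] <;> omega
  have he' : e' = d + (e 0 - e' 0) • Finsupp.single 2 N := by
    ext i; fin_cases i <;> simp [d, h2', mul_comm]
  have hdvd := monomial_sub_monomial_dvd (R := k) (Finsupp.single 0 1 + Finsupp.single 1 1)
    (Finsupp.single 2 N) d (e 0 - e' 0)
  rw [← he, ← he', ← X_mul_X_sub_X_pow_eq_monomial_sub_monomial] at hdvd
  rwa [Ideal.Quotient.eq, Ideal.mem_span_singleton]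

noncomputable def toCoordRing (hN : 0 < N) : AddMonoidAlgebra k (Q N) →ₐ[k] CoordRing k N :=
  AddMonoidAlgebra.lift k (CoordRing k N) (Q N)
    ((weightQ N).toMultiplicative.liftOfSurjectiveOfFibers (weightQ_surjective N)
      ((Ideal.Quotient.mk _ : MvPolynomial (Fin 3) k →+* CoordRing k N).toMonoidHom.comp
        (monomialOneHom k (Fin 3)))
      fun _ _ h ↦ mk_monomial_eq_of_weight_eq k N hN (congrArg Subtype.val h))

theorem toCoordRing_single_weightQ (hN : 0 < N) (e : Fin 3 →₀ ℕ) :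
    toCoordRing k N hN (AddMonoidAlgebra.single (weightQ N e) 1) =
      Ideal.Quotient.mk _ (monomial e 1) := by
  rw [toCoordRing, AddMonoidAlgebra.lift_single, one_smul]
  exact MonoidHom.liftOfSurjectiveOfFibers_apply _ _ _ _ (Multiplicative.ofAdd e)

noncomputable def ofMvPolynomial : MvPolynomial (Fin 3) k →ₐ[k] AddMonoidAlgebra k (Q N) :=
  AddMonoidAlgebra.mapDomainAlgHom k k (weightQ N)

theorem ofMvPolynomial_monomial (e : Fin 3 →₀ ℕ) :
    ofMvPolynomial k N (monomial e 1) = AddMonoidAlgebra.single (weightQ N e) 1 :=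
  AddMonoidAlgebra.mapDomain_single

theorem ofMvPolynomial_X_mul_X_sub_X_pow : ofMvPolynomial k N (X 0 * X 1 - X 2 ^ N) = 0 := by
  rw [X_mul_X_sub_X_pow_eq_monomial_sub_monomial, map_sub, ofMvPolynomial_monomial, ofMvPolynomial_monomial,
    sub_eq_zero]
  congr 1
  exact Subtype.ext (by ext <;> simp [weightQ, weight])

noncomputable def ofCoordRing : CoordRing k N →ₐ[k] AddMonoidAlgebra k (Q N) :=
  Ideal.Quotient.liftₐ _ (ofMvPolynomial k N) fun a ha ↦ by
    obtain ⟨c, rfl⟩ := Ideal.mem_span_singleton'.1 ha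
    rw [map_mul, ofMvPolynomial_X_mul_X_sub_X_pow, mul_zero]

theorem ofCoordRing_mk (p : MvPolynomial (Fin 3) k) :
    ofCoordRing k N (Ideal.Quotient.mk _ p) = ofMvPolynomial k N p :=
  Ideal.Quotient.liftₐ_apply _ _ _ _

noncomputable def monoidAlgebraEquiv (hN : 0 < N) : AddMonoidAlgebra k (Q N) ≃ₐ[k] CoordRing k N :=
  AlgEquiv.ofAlgHom (toCoordRing k N hN) (ofCoordRing k N)
    (Ideal.Quotient.algHom_ext _ <| MvPolynomial.algHom_ext fun i ↦ by
      simp only [AlgHom.comp_apply, Ideal.Quotient.mkₐ_eq_mk, AlgHom.id_apply]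
      have h := toCoordRing_single_weightQ k N hN (Finsupp.single i 1)
      rwa [← ofMvPolynomial_monomial, ← ofCoordRing_mk] at h)
    (AddMonoidAlgebra.algHom_ext (fun q ↦ by
      obtain ⟨e, rfl⟩ := weightQ_surjective N q
      rw [AlgHom.comp_apply, toCoordRing_single_weightQ, ofCoordRing_mk, ofMvPolynomial_monomial,
        AlgHom.id_apply]) (Subsingleton.elim _ _))

end ANSingularity

/-- For `Q` the submonoid of `ℕ²` generated by `(N,0)`, `(0,N)` and `(1,1)`,
the monoid algebra `ℂ[Q]` is isomorphic as a `ℂ`-algebra to `ℂ[x,y,z]/(xy - z^N)`. -/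
theorem monoidAlgebra_iso_quotient (N : ℕ) (hN : 0 < N) :
    Nonempty
      (AddMonoidAlgebra ℂ
          (AddSubmonoid.closure ({(N, 0), (0, N), (1, 1)} : Set (ℕ × ℕ)))
        ≃ₐ[ℂ]
        (MvPolynomial (Fin 3) ℂ ⧸
          Ideal.span ({X 0 * X 1 - X 2 ^ N} : Set (MvPolynomial (Fin 3) ℂ)))) :=
  ⟨ANSingularity.monoidAlgebraEquiv ℂ N hN⟩
end

section
/- Let ε be a primitive N-th root of unity and let the cyclic group G of order N act on the polynomial ring ℂ[u,v] by g·u = εu, g·v = ε⁻¹v. Then ℂ[u,v]^G is isomorphic as a ℂ-algebra to ℂ[x,y,z]/(xy - z^N) via x ↦ u^N, y ↦ v^N, z ↦ uv. -/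
/-!
The generator scales `u^a v^b` by `ε^(a-b)`, so the invariants are spanned by the monomials with
`a ≡ b [MOD N]`, and each of these is the image of `x^((a-m)/N) y^((b-m)/N) z^m`, `m = min a b`,
under `x ↦ u^N, y ↦ v^N, z ↦ uv`. Conversely, sending `u^a v^b` to the class of that same
monomial is a linear left inverse of this map modulo `xy - z^N`, because `z^N = xy` in the
quotient; hence the kernel is exactly `(xy - z^N)`.
-/

open MvPolynomial

namespace CyclicQuotientSingularity

noncomputable section

section Ring

variable {R : Type*} [CommRing R] (N : ℕ)

lemma monomial_one_fin_two (e : Fin 2 →₀ ℕ) :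
    (monomial e 1 : MvPolynomial (Fin 2) R) = X 0 ^ e 0 * X 1 ^ e 1 := by
  rw [monomial_eq, C_1, one_mul, Finsupp.prod_fintype _ _ fun _ => pow_zero _, Fin.prod_univ_two]

lemma monomial_one_fin_three (d : Fin 3 →₀ ℕ) :
    (monomial d 1 : MvPolynomial (Fin 3) R) = X 0 ^ d 0 * X 1 ^ d 1 * X 2 ^ d 2 := by
  rw [monomial_eq, C_1, one_mul, Finsupp.prod_fintype _ _ fun _ => pow_zero _,
    Fin.prod_univ_three]

abbrev invariantsMap : MvPolynomial (Fin 3) R →ₐ[R] MvPolynomial (Fin 2) R :=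
  aeval ![X 0 ^ N, X 1 ^ N, X 0 * X 1]

lemma invariantsMap_X_pow (i j k : ℕ) :
    invariantsMap N (X 0 ^ i * X 1 ^ j * X 2 ^ k : MvPolynomial (Fin 3) R) =
      X 0 ^ (N * i + k) * X 1 ^ (N * j + k) := by
  simp only [map_mul, map_pow, aeval_X, Matrix.cons_val_zero, Matrix.cons_val_one,
    Matrix.cons_val_two, Matrix.head_cons, Matrix.tail_cons]
  ring

lemma invariantsMap_monomial (d : Fin 3 →₀ ℕ) :
    invariantsMap N (monomial d (1 : R)) =
      monomial (.single 0 (N * d 0 + d 2) + .single 1 (N * d 1 + d 2)) 1 := by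
  rw [monomial_one_fin_three, monomial_one_fin_two, invariantsMap_X_pow]
  simp

def preimageMonomial (a b : ℕ) : MvPolynomial (Fin 3) R :=
  X 0 ^ ((a - min a b) / N) * X 1 ^ ((b - min a b) / N) * X 2 ^ min a b

lemma invariantsMap_preimageMonomial {a b : ℕ} (h : a ≡ b [MOD N]) :
    invariantsMap N (preimageMonomial (R := R) N a b) = X 0 ^ a * X 1 ^ b := by
  have ha : N ∣ a - min a b := (Nat.modEq_iff_dvd' (min_le_left a b)).1 <| by
    rcases min_choice a b with hm | hm <;> rw [hm]
    exact h.symm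
  have hb : N ∣ b - min a b := (Nat.modEq_iff_dvd' (min_le_right a b)).1 <| by
    rcases min_choice a b with hm | hm <;> rw [hm]
    exact h
  rw [preimageMonomial, invariantsMap_X_pow, Nat.mul_div_cancel' ha, Nat.mul_div_cancel' hb,
    Nat.sub_add_cancel (min_le_left a b), Nat.sub_add_cancel (min_le_right a b)]

variable (R) in
abbrev relationIdeal : Ideal (MvPolynomial (Fin 3) R) :=
  Ideal.span {X 0 * X 1 - X 2 ^ N}

variable {N}

lemma mk_preimageMonomial (hN : 0 < N) (i j k : ℕ) :
    Ideal.Quotient.mk (relationIdeal R N) (preimageMonomial N (N * i + k) (N * j + k)) =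
      Ideal.Quotient.mk (relationIdeal R N) (X 0 ^ i * X 1 ^ j * X 2 ^ k) := by
  have hmin : min (N * i + k) (N * j + k) = N * min i j + k := by
    rw [min_add_add_right, Nat.mul_min_mul_left]
  have hsub (n : ℕ) : (N * n + k - (N * min i j + k)) / N = n - min i j := by
    rw [Nat.add_sub_add_right, ← Nat.mul_sub, Nat.mul_div_cancel_left _ hN]
  set π := Ideal.Quotient.mk (relationIdeal R N)
  have hrel : π (X 2) ^ N = π (X 0) * π (X 1) := by
    rw [← map_pow, ← map_mul, Ideal.Quotient.mk_eq_mk_iff_sub_mem, ← neg_sub, Ideal.neg_mem_iff]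
    exact Ideal.subset_span rfl
  obtain ⟨i', hi'⟩ := Nat.exists_eq_add_of_le (min_le_left i j)
  obtain ⟨j', hj'⟩ := Nat.exists_eq_add_of_le (min_le_right i j)
  rw [preimageMonomial, hmin, hsub, hsub, show i - min i j = i' by omega,
    show j - min i j = j' by omega]
  generalize min i j = m at hi' hj' ⊢
  subst hi' hj'
  simp only [map_mul, map_pow, pow_add, pow_mul, hrel]
  ring

variable (N) in
def retraction :
    MvPolynomial (Fin 2) R →ₗ[R] MvPolynomial (Fin 3) R ⧸ relationIdeal R N :=
  (basisMonomials (Fin 2) R).constr R fun e =>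
    Ideal.Quotient.mk _ (preimageMonomial N (e 0) (e 1))

lemma retraction_monomial (e : Fin 2 →₀ ℕ) :
    retraction N (monomial e (1 : R)) = Ideal.Quotient.mk _ (preimageMonomial N (e 0) (e 1)) :=
  (basisMonomials (Fin 2) R).constr_basis R _ e

lemma retraction_invariantsMap (hN : 0 < N) (p : MvPolynomial (Fin 3) R) :
    retraction N (invariantsMap N p) = Ideal.Quotient.mk _ p := by
  suffices retraction N ∘ₗ (invariantsMap N).toLinearMap =
      (Ideal.Quotient.mkₐ R (relationIdeal R N)).toLinearMap from
    LinearMap.congr_fun this p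
  refine (basisMonomials (Fin 3) R).ext fun d => ?_
  rw [coe_basisMonomials, LinearMap.comp_apply, AlgHom.toLinearMap_apply,
    invariantsMap_monomial, retraction_monomial]
  simpa [monomial_one_fin_three] using mk_preimageMonomial hN (d 0) (d 1) (d 2)

lemma ker_invariantsMap (hN : 0 < N) :
    RingHom.ker (invariantsMap (R := R) N) = relationIdeal R N := by
  refine le_antisymm (fun p hp => ?_) (Ideal.span_le.2 ?_)
  · rw [← Ideal.Quotient.eq_zero_iff_mem, ← retraction_invariantsMap hN p, RingHom.mem_ker.1 hp,
      map_zero]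
  · rintro _ rfl
    simp [mul_pow]

end Ring

section Field

variable {K : Type*} [Field K] {N : ℕ} {ε : K}

variable (ε) in
abbrev generatorAction : MvPolynomial (Fin 2) K →ₐ[K] MvPolynomial (Fin 2) K :=
  aeval ![C ε * X 0, C ε⁻¹ * X 1]

variable (ε) in
lemma coeff_generatorAction (p : MvPolynomial (Fin 2) K) (e : Fin 2 →₀ ℕ) :
    coeff e (generatorAction ε p) = ε ^ e 0 * ε⁻¹ ^ e 1 * coeff e p := by
  induction p using MvPolynomial.induction_on' with
  | add p q hp hq => simp only [map_add, coeff_add, hp, hq, mul_add]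
  | monomial d c =>
    have hmonomial (a : K) : monomial d a = C a * (X 0 ^ d 0 * X 1 ^ d 1) := by
      rw [← monomial_one_fin_two, C_mul_monomial, mul_one]
    have : generatorAction ε (monomial d c) = monomial d (ε ^ d 0 * ε⁻¹ ^ d 1 * c) := by
      simp only [hmonomial, map_mul, map_pow, aeval_C, aeval_X, Matrix.cons_val_zero,
        Matrix.cons_val_one, mul_pow, algebraMap_eq]
      ring
    rw [this, coeff_monomial, coeff_monomial]
    split_ifs with h
    · rw [h]
    · rw [mul_zero]

lemma modEq_of_mem_support (hN : N ≠ 0) (hε : IsPrimitiveRoot ε N)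
    {p : MvPolynomial (Fin 2) K} (hp : generatorAction ε p = p) {e : Fin 2 →₀ ℕ}
    (he : e ∈ p.support) :
    e 0 ≡ e 1 [MOD N] := by
  have hcoeff := coeff_generatorAction ε p e
  rw [hp] at hcoeff
  have hweight : ε ^ e 0 * (ε ^ e 1)⁻¹ = 1 := by
    rw [← inv_pow]
    exact mul_right_cancel₀ (mem_support_iff.1 he) (by rw [one_mul, ← hcoeff])
  have hpow := (mul_inv_eq_one₀ (pow_ne_zero _ (hε.ne_zero hN))).1 hweight
  rwa [(hε.isOfFinOrder hN).pow_eq_pow_iff_modEq, ← hε.eq_orderOf] at hpow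

lemma generatorAction_comp_invariantsMap (hN : N ≠ 0) (hε : ε ^ N = 1) :
    (generatorAction ε).comp (invariantsMap N) = invariantsMap N := by
  have hε0 : ε ≠ 0 := by
    rintro rfl
    simp [hN] at hε
  refine algHom_ext fun i => ?_
  fin_cases i
  · simp [mul_pow, ← C_pow, hε]
  · simp [mul_pow, ← C_pow, hε]
  · simp only [Fin.reduceFinMk, AlgHom.comp_apply, aeval_X, Matrix.cons_val, map_mul]
    rw [mul_mul_mul_comm, ← C_mul, mul_inv_cancel₀ hε0, C_1, one_mul]

lemma range_invariantsMap (hN : N ≠ 0) (hε : IsPrimitiveRoot ε N) :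
    (invariantsMap N).range = AlgHom.equalizer (generatorAction ε) (AlgHom.id K _) := by
  refine le_antisymm ?_ fun p hp => ?_
  · rintro _ ⟨p, rfl⟩
    exact AlgHom.congr_fun (generatorAction_comp_invariantsMap hN hε.pow_eq_one) p
  · rw [p.as_sum]
    refine Subalgebra.sum_mem _ fun e he => ?_
    rw [← mul_one (coeff e p), ← smul_eq_mul, ← smul_monomial, monomial_one_fin_two,
      ← invariantsMap_preimageMonomial N (modEq_of_mem_support hN hε hp he)]
    exact Subalgebra.smul_mem _ (AlgHom.mem_range_self _ _) _

def quotientEquivInvariants (hN : 0 < N) (hε : IsPrimitiveRoot ε N) :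
    (MvPolynomial (Fin 3) K ⧸ relationIdeal K N) ≃ₐ[K]
      AlgHom.equalizer (generatorAction ε) (AlgHom.id K (MvPolynomial (Fin 2) K)) :=
  (Ideal.quotientEquivAlgOfEq K (ker_invariantsMap hN).symm).trans <|
    (Ideal.quotientKerEquivRange _).trans <|
      Subalgebra.equivOfEq _ _ (range_invariantsMap hN.ne' hε)

lemma quotientEquivInvariants_mk (hN : 0 < N) (hε : IsPrimitiveRoot ε N)
    (p : MvPolynomial (Fin 3) K) :
    (quotientEquivInvariants hN hε (Ideal.Quotient.mk _ p) : MvPolynomial (Fin 2) K) =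
      invariantsMap N p :=
  rfl

end Field

end

end CyclicQuotientSingularity

/-- For `ε` a primitive `N`-th root of unity and the cyclic group of order `N` acting on
`ℂ[u,v]` by `u ↦ εu`, `v ↦ ε⁻¹v`, the invariant ring `ℂ[u,v]^G` is isomorphic to
`ℂ[x,y,z]/(xy - z^N)` via `x ↦ u^N`, `y ↦ v^N`, `z ↦ uv`. -/
theorem quotient_iso_invariants (N : ℕ) (hN : 0 < N) (ε : ℂ) (hε : IsPrimitiveRoot ε N) :
    ∃ e : (MvPolynomial (Fin 3) ℂ ⧸
            Ideal.span ({X 0 * X 1 - X 2 ^ N} : Set (MvPolynomial (Fin 3) ℂ)))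
          ≃ₐ[ℂ]
          (AlgHom.equalizer
            (aeval ![C ε * X 0, C ε⁻¹ * X 1] :
              MvPolynomial (Fin 2) ℂ →ₐ[ℂ] MvPolynomial (Fin 2) ℂ)
            (AlgHom.id ℂ (MvPolynomial (Fin 2) ℂ))),
      ((e (Ideal.Quotient.mk _ (X 0)) : MvPolynomial (Fin 2) ℂ) = X 0 ^ N)
      ∧ ((e (Ideal.Quotient.mk _ (X 1)) : MvPolynomial (Fin 2) ℂ) = X 1 ^ N)
      ∧ ((e (Ideal.Quotient.mk _ (X 2)) : MvPolynomial (Fin 2) ℂ) = X 0 * X 1) := by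
  refine ⟨CyclicQuotientSingularity.quotientEquivInvariants hN hε, ?_, ?_, ?_⟩ <;>
    rw [CyclicQuotientSingularity.quotientEquivInvariants_mk] <;> simp
end
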